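/- Let Φ be an irreducible reduced root system with a Weyl-group-invariant positive definite inner product (·,·), let α, γ be positive roots with γ − α a nonzero sum of simple roots with non-negative coefficients. Then there exists a simple root δ occurring with positive coefficient in γ − α such that either α + δ ∈ Φ or γ − δ ∈ Φ. -/

import Mathlib

open Finset

/-- A (concrete) reduced root system in a real inner product space, with a fixed base `Δ`
of simple roots and the integer coefficient function of roots with respect to the base. -/
structure RootSystemData (V : Type*) [NormedAddCommGroup V] [InnerProductSpace ℝ V] where
  /-- the finite set of roots -/
  Φ : Finset V
  /-- the base of simple roots -/
  Δ : Finset V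
  nonempty : Φ.Nonempty
  Δ_subset : Δ ⊆ Φ
  zero_not_mem : (0 : V) ∉ Φ
  /-- `coeff α δ` is the coefficient of the simple root `δ` in `α` -/
  coeff : V → V → ℤ
  root_eq_sum : ∀ α ∈ Φ, α = ∑ δ ∈ Δ, (coeff α δ : ℝ) • δ
  coeff_sign : ∀ α ∈ Φ, (∀ δ ∈ Δ, 0 ≤ coeff α δ) ∨ (∀ δ ∈ Δ, coeff α δ ≤ 0)
  coeff_self : ∀ δ ∈ Δ, coeff δ δ = 1
  coeff_ne : ∀ δ ∈ Δ, ∀ δ' ∈ Δ, δ ≠ δ' → coeff δ δ' = 0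
  linIndep : LinearIndependent ℝ (fun δ : ↥Δ => (δ : V))
  neg_mem : ∀ α ∈ Φ, -α ∈ Φ
  reduced : ∀ α ∈ Φ, ∀ t : ℝ, t • α ∈ Φ → t = 1 ∨ t = -1
  /-- the integer Cartan pairing `⟨α, β^∨⟩` -/
  cartan : V → V → ℤ
  cartan_eq : ∀ α ∈ Φ, ∀ β ∈ Φ, (cartan α β : ℝ) * (inner ℝ β β : ℝ) = 2 * (inner ℝ α β : ℝ)
  reflect_mem : ∀ α ∈ Φ, ∀ β ∈ Φ, α - (cartan α β : ℝ) • β ∈ Φ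
  irreducible : ∀ S ⊆ Φ, (∀ α ∈ S, ∀ β ∈ Φ, β ∉ S → (inner ℝ α β : ℝ) = 0) → S = ∅ ∨ S = Φ

namespace RootSystemData

variable {V : Type*} [NormedAddCommGroup V] [InnerProductSpace ℝ V] (R : RootSystemData V)

/-- The height of a root: the sum of its coefficients over the base. -/
def ht (α : V) : ℤ := ∑ δ ∈ R.Δ, R.coeff α δ

/-- `α` is a positive root. -/
def IsPos (α : V) : Prop := α ∈ R.Φ ∧ ∀ δ ∈ R.Δ, 0 ≤ R.coeff α δ

/-- The set of positive roots. -/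
def posRoots : Finset V := R.Φ.filter (fun α => ∀ δ ∈ R.Δ, 0 ≤ R.coeff α δ)

/-- The set of negative roots. -/
def negRoots : Finset V := R.Φ.filter (fun α => ∀ δ ∈ R.Δ, R.coeff α δ ≤ 0)

/-- The Coxeter number `h = 1 + max height`. -/
def coxeter : ℤ := 1 + R.Φ.sup' R.nonempty R.ht

/-- The dominance order: `γ - α` is a nonnegative combination of simple roots. -/
def le (α γ : V) : Prop := ∀ δ ∈ R.Δ, R.coeff α δ ≤ R.coeff γ δ

/-- Strict dominance order. -/
def lt (α γ : V) : Prop := R.le α γ ∧ α ≠ γ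

/-- `Φ_k`: the roots of height congruent to `k` modulo the Coxeter number. -/
def phiMod (k : ℤ) : Finset V := R.Φ.filter (fun γ => R.ht γ % R.coxeter = k % R.coxeter)

end RootSystemData

/-!
Suppose no such `δ` exists and write `γ - α = ∑ c_δ δ` with `c_δ ≥ 0`. Two roots with positive
inner product that are neither equal nor opposite differ by a root (one of the Cartan integers
`⟨a, b^∨⟩, ⟨b, a^∨⟩` is `1`, since their product is `< 4` by strict Cauchy–Schwarz). So for every
`δ` with `c_δ > 0`, `α + δ ∉ Φ` forces `(α, δ) ≥ 0` and `γ - δ ∉ Φ` forces `(γ, δ) ≤ 0`; hence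
`(γ - α, δ) ≤ 0`, and `(γ - α, γ - α) = ∑ c_δ (γ - α, δ) ≤ 0` gives `γ = α`.
-/

open scoped InnerProductSpace

lemma sum_smul_eq_zero_of_inner_nonpos {V ι : Type*} [NormedAddCommGroup V]
    [InnerProductSpace ℝ V] {s : Finset ι} {v : ι → V} {c : ι → ℝ} (hc : ∀ i ∈ s, 0 ≤ c i)
    (h : ∀ i ∈ s, 0 < c i → ⟪∑ j ∈ s, c j • v j, v i⟫_ℝ ≤ 0) : ∑ i ∈ s, c i • v i = 0 := by
  set x := ∑ i ∈ s, c i • v i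
  refine real_inner_self_nonpos.mp ?_
  calc ⟪x, x⟫_ℝ = ∑ i ∈ s, c i * ⟪x, v i⟫_ℝ := by simp only [x, inner_sum, real_inner_smul_right]
    _ ≤ 0 := sum_nonpos fun i hi ↦ (hc i hi).eq_or_lt.elim (fun h0 ↦ by simp [← h0])
        fun hpos ↦ mul_nonpos_of_nonneg_of_nonpos hpos.le (h i hi hpos)

namespace RootSystemData

variable {V : Type*} [NormedAddCommGroup V] [InnerProductSpace ℝ V] (R : RootSystemData V)

lemma coeff_eq_of_eq_sum {x : V} (hx : x ∈ R.Φ) {c : V → ℝ} (h : x = ∑ δ ∈ R.Δ, c δ • δ)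
    {δ : V} (hδ : δ ∈ R.Δ) : (R.coeff x δ : ℝ) = c δ :=
  (linearIndepOn_finset_iffₛ (v := id) (s := R.Δ)).mp R.linIndep (fun δ ↦ (R.coeff x δ : ℝ)) c
    ((R.root_eq_sum x hx).symm.trans h) δ hδ

lemma coeff_neg {x : V} (hx : x ∈ R.Φ) {δ : V} (hδ : δ ∈ R.Δ) :
    R.coeff (-x) δ = -R.coeff x δ := by
  have h : -x = ∑ δ ∈ R.Δ, (-(R.coeff x δ : ℝ)) • δ := by
    simp only [neg_smul, sum_neg_distrib, ← R.root_eq_sum x hx]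
  exact_mod_cast R.coeff_eq_of_eq_sum (R.neg_mem x hx) h hδ

lemma exists_coeff_ne_zero {x : V} (hx : x ∈ R.Φ) : ∃ δ ∈ R.Δ, R.coeff x δ ≠ 0 := by
  by_contra! h
  have hx0 : x = 0 := by
    rw [R.root_eq_sum x hx]
    exact sum_eq_zero fun δ hδ ↦ by simp [h δ hδ]
  exact R.zero_not_mem (hx0 ▸ hx)

variable {R} in
lemma IsPos.ne_neg_simple {α δ : V} (hα : R.IsPos α) (hδ : δ ∈ R.Δ) : α ≠ -δ := by
  rintro rfl
  have := hα.2 δ hδ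
  rw [R.coeff_neg (R.Δ_subset hδ) hδ, R.coeff_self δ hδ] at this
  omega

variable {R} in
lemma IsPos.eq_of_le_simple {α δ : V} (hα : R.IsPos α) (hδ : δ ∈ R.Δ) (hle : R.le α δ) :
    α = δ := by
  have hoff : ∀ δ' ∈ R.Δ, δ' ≠ δ → R.coeff α δ' = 0 := fun δ' hδ' hne ↦ by
    have := hle δ' hδ'
    rw [R.coeff_ne δ hδ δ' hδ' hne.symm] at this
    exact le_antisymm this (hα.2 δ' hδ')
  have hself : R.coeff α δ = 1 := by
    obtain ⟨δ', hδ', hne⟩ := R.exists_coeff_ne_zero hα.1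
    have hδ'δ : δ' = δ := by_contra fun h ↦ hne (hoff δ' hδ' h)
    subst hδ'δ
    have := hle δ' hδ'
    rw [R.coeff_self δ' hδ'] at this
    have := hα.2 δ' hδ'
    omega
  rw [R.root_eq_sum α hα.1, sum_eq_single_of_mem δ hδ fun δ' hδ' hne ↦ by simp [hoff δ' hδ' hne],
    hself, Int.cast_one, one_smul]

lemma inner_mul_inner_lt {a b : V} (ha : a ∈ R.Φ) (hb : b ∈ R.Φ) (hne : a ≠ b)
    (hpos : 0 < ⟪a, b⟫_ℝ) : ⟪a, b⟫_ℝ * ⟪a, b⟫_ℝ < ⟪a, a⟫_ℝ * ⟪b, b⟫_ℝ := by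
  have hb0 : b ≠ 0 := fun h ↦ R.zero_not_mem (h ▸ hb)
  have hlt : ⟪a, b⟫_ℝ < ‖a‖ * ‖b‖ := by
    refine (real_inner_le_norm a b).lt_of_ne fun heq ↦ hne ?_
    have hab : (‖a‖ / ‖b‖) • b = a := by
      rw [div_eq_inv_mul, mul_smul, ← inner_eq_norm_mul_iff_real.mp heq,
        inv_smul_smul₀ (norm_ne_zero_iff.mpr hb0)]
    rcases R.reduced b hb _ (hab ▸ ha) with h | h
    · rwa [h, one_smul, eq_comm] at hab
    · rw [h, neg_one_smul] at hab
      rw [← hab, inner_neg_left, real_inner_self_eq_norm_mul_norm] at hpos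
      nlinarith [norm_nonneg b]
  rw [real_inner_self_eq_norm_mul_norm, real_inner_self_eq_norm_mul_norm]
  nlinarith

lemma cartan_mul_cartan_lt_four {a b : V} (ha : a ∈ R.Φ) (hb : b ∈ R.Φ) (hne : a ≠ b)
    (hpos : 0 < ⟪a, b⟫_ℝ) : R.cartan a b * R.cartan b a < 4 := by
  have hab := R.cartan_eq a ha b hb
  have hba := R.cartan_eq b hb a ha
  rw [real_inner_comm a b] at hba
  have hprod : ((R.cartan a b * R.cartan b a : ℤ) : ℝ) * (⟪a, a⟫_ℝ * ⟪b, b⟫_ℝ)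
      = 4 * (⟪a, b⟫_ℝ * ⟪a, b⟫_ℝ) := by
    push_cast
    linear_combination (R.cartan b a * ⟪a, a⟫_ℝ) * hab + (2 * ⟪a, b⟫_ℝ) * hba
  have : ((R.cartan a b * R.cartan b a : ℤ) : ℝ) * (⟪a, a⟫_ℝ * ⟪b, b⟫_ℝ)
      < 4 * (⟪a, a⟫_ℝ * ⟪b, b⟫_ℝ) := by
    linarith [R.inner_mul_inner_lt ha hb hne hpos]
  exact_mod_cast lt_of_mul_lt_mul_right this
    (mul_nonneg real_inner_self_nonneg real_inner_self_nonneg)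

lemma cartan_pos_of_inner_pos {a b : V} (ha : a ∈ R.Φ) (hb : b ∈ R.Φ)
    (hpos : 0 < ⟪a, b⟫_ℝ) : 0 < R.cartan a b := by
  have hbb : 0 < ⟪b, b⟫_ℝ := real_inner_self_pos.mpr fun h ↦ R.zero_not_mem (h ▸ hb)
  have := R.cartan_eq a ha b hb
  exact_mod_cast pos_of_mul_pos_left (by linarith : (0 : ℝ) < R.cartan a b * ⟪b, b⟫_ℝ) hbb.le

lemma sub_mem_of_inner_pos {a b : V} (ha : a ∈ R.Φ) (hb : b ∈ R.Φ) (hne : a ≠ b)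
    (hpos : 0 < ⟪a, b⟫_ℝ) : a - b ∈ R.Φ := by
  have hab := R.cartan_pos_of_inner_pos ha hb hpos
  have hba := R.cartan_pos_of_inner_pos hb ha (real_inner_comm a b ▸ hpos)
  have hlt := R.cartan_mul_cartan_lt_four ha hb hne hpos
  obtain h | h : R.cartan a b = 1 ∨ R.cartan b a = 1 := by
    by_contra! h
    have h2ab : 2 ≤ R.cartan a b := by omega
    have h2ba : 2 ≤ R.cartan b a := by omega
    nlinarith
  · simpa [h] using R.reflect_mem a ha b hb
  · simpa [h] using R.neg_mem _ (R.reflect_mem b hb a ha)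

lemma inner_nonpos_of_sub_notMem {a b : V} (ha : a ∈ R.Φ) (hb : b ∈ R.Φ) (hne : a ≠ b)
    (h : a - b ∉ R.Φ) : ⟪a, b⟫_ℝ ≤ 0 :=
  not_lt.mp fun hpos ↦ h (R.sub_mem_of_inner_pos ha hb hne hpos)

lemma inner_nonneg_of_add_notMem {a b : V} (ha : a ∈ R.Φ) (hb : b ∈ R.Φ) (hne : a ≠ -b)
    (h : a + b ∉ R.Φ) : 0 ≤ ⟪a, b⟫_ℝ := by
  have := R.inner_nonpos_of_sub_notMem ha (R.neg_mem b hb) hne (by rwa [sub_neg_eq_add])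
  rwa [inner_neg_right, neg_nonpos] at this

end RootSystemData

open RootSystemData in
/-- If `α, γ` are positive roots with `γ - α` a nonzero nonnegative combination
of simple roots, then some simple root `δ` occurring with positive coefficient in `γ - α`
satisfies `α + δ ∈ Φ` or `γ - δ ∈ Φ`. -/
theorem exists_simple_root_add_or_sub_mem
    {V : Type*} [NormedAddCommGroup V] [InnerProductSpace ℝ V]
    (R : RootSystemData V) (α γ : V) (hα : R.IsPos α) (hγ : R.IsPos γ)
    (hle : R.le α γ) (hne : α ≠ γ) :
    ∃ δ ∈ R.Δ, R.coeff α δ < R.coeff γ δ ∧ (α + δ ∈ R.Φ ∨ γ - δ ∈ R.Φ) := by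
  by_contra! h
  have hβ : γ - α = ∑ δ ∈ R.Δ, ((R.coeff γ δ : ℝ) - R.coeff α δ) • δ := by
    simp only [sub_smul, sum_sub_distrib]
    rw [← R.root_eq_sum γ hγ.1, ← R.root_eq_sum α hα.1]
  refine hne (sub_eq_zero.mp (hβ.trans (sum_smul_eq_zero_of_inner_nonpos ?_ ?_))).symm
  · exact fun δ hδ ↦ sub_nonneg.mpr (Int.cast_le.mpr (hle δ hδ))
  · intro δ hδ hpos
    have hlt : R.coeff α δ < R.coeff γ δ := by exact_mod_cast sub_pos.mp hpos
    obtain ⟨hadd, hsub⟩ := h δ hδ hlt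
    have hγδ : γ ≠ δ := fun hγδ ↦ hne ((hα.eq_of_le_simple hδ (hγδ ▸ hle)).trans hγδ.symm)
    rw [← hβ, inner_sub_left]
    linarith [R.inner_nonneg_of_add_notMem hα.1 (R.Δ_subset hδ) (hα.ne_neg_simple hδ) hadd,
      R.inner_nonpos_of_sub_notMem hγ.1 (R.Δ_subset hδ) hγδ hsub]
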